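/- Let T be a closed subset of [0,1] containing 0 and 1. For every h ∈ H_T and h̃ ∈ H¹, one has |⟨h, J(h̃)⟩_{H_T}| ≤ 2 ‖h‖_{H_T} ‖h̃‖_{H¹}, where J(h̃) is the restriction of h̃ to T, which lies in H_T. -/

import Mathlib

open MeasureTheory Set
open scoped ENNReal Classical

noncomputable def rhoBar (T : Set ℝ) (t : ℝ) : ℝ :=
  if t = 0 then 0 else sSup {u | u ∈ T ∧ u < t}

noncomputable def sigmaBar (T : Set ℝ) (t : ℝ) : ℝ :=
  if t = 1 then 1 else sInf {u | u ∈ T ∧ t < u}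

noncomputable def lamDelta (T : Set ℝ) : Measure ℝ :=
  Measure.map (rhoBar T) (volume.restrict (Icc 0 1))

noncomputable def htilde (g : ℝ → ℝ) (t : ℝ) : ℝ := ∫ s in Ico (0:ℝ) t, g s

noncomputable def jDensity (T : Set ℝ) (g : ℝ → ℝ) (t : ℝ) : ℝ :=
  if sigmaBar T t = t then g t
  else (htilde g (sigmaBar T t) - htilde g t) / (sigmaBar T t - t)

noncomputable def gDot (T : Set ℝ) (hΔ : ℝ → ℝ) (s : ℝ) : ℝ :=
  if s ∈ T then hΔ s else hΔ (rhoBar T s)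

/-! Pulling back along `rhoBar T` turns `lamDelta T` into Lebesgue measure on `[0, 1]`.
There, `jDensity T g ∘ rhoBar T` equals `g` off the gaps `(r, sigmaBar T r]` of `T` (up to the
countable set of right-scattered points), and on each gap it is the mean of `g` over the gap.
Since every set `rhoBar T ⁻¹' A` either contains a gap or misses it, `jDensity T g ∘ rhoBar T` is
the conditional expectation of `g` given `rhoBar T`. Integrating it over
`rhoBar T ⁻¹' ([0, t) ∩ T)` recovers `htilde g t`, and pulling out the `rhoBar T`-measurable
factor `hΔ ∘ rhoBar T` turns `⟨hΔ, J g⟩` into `∫ (hΔ ∘ rhoBar T) * g`, which Cauchy–Schwarz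
bounds. A non-measurable `g` is first replaced by a measurable version: `lamDelta T` is absolutely
continuous with respect to Lebesgue measure on the right-dense points, where `jDensity T g`
samples `g` pointwise. -/

lemma abs_integral_mul_le_sqrt_mul_sqrt {α : Type*} [MeasurableSpace α] {μ : Measure α}
    {f g : α → ℝ} (hf : MemLp f 2 μ) (hg : MemLp g 2 μ) :
    |∫ a, f a * g a ∂μ| ≤ √(∫ a, f a ^ 2 ∂μ) * √(∫ a, g a ^ 2 ∂μ) := by
  have hholder := integral_mul_norm_le_Lp_mul_Lq (μ := μ) (f := f) (g := g)
    Real.HolderConjugate.two_two (by rwa [ENNReal.ofReal_ofNat]) (by rwa [ENNReal.ofReal_ofNat])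
  simp only [Real.norm_eq_abs, Real.rpow_two, sq_abs, ← Real.sqrt_eq_rpow] at hholder
  calc |∫ a, f a * g a ∂μ| ≤ ∫ a, |f a| * |g a| ∂μ :=
        (abs_integral_le_integral_abs (f := fun a => f a * g a)).trans_eq (by simp only [abs_mul])
    _ ≤ _ := hholder

lemma setLIntegral_enorm_le_of_eqOn_const {α E : Type*} [MeasurableSpace α] {μ : Measure α}
    [NormedAddCommGroup E] [NormedSpace ℝ E] [CompleteSpace E] {s : Set α} {f g : α → E} {c : E}
    (hs : MeasurableSet s) (hμs : μ s ≠ ∞) (hf : EqOn f (fun _ => c) s)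
    (hfg : ∫ x in s, f x ∂μ = ∫ x in s, g x ∂μ) :
    ∫⁻ x in s, ‖f x‖ₑ ∂μ ≤ ∫⁻ x in s, ‖g x‖ₑ ∂μ :=
  calc ∫⁻ x in s, ‖f x‖ₑ ∂μ = ‖∫ x in s, f x ∂μ‖ₑ := by
        rw [setLIntegral_congr_fun hs fun x hx => by rw [hf hx], setIntegral_congr_fun hs hf,
          setLIntegral_const, setIntegral_const, enorm_smul, measureReal_def,
          Real.enorm_eq_ofReal ENNReal.toReal_nonneg, ENNReal.ofReal_toReal hμs, mul_comm]
    _ = ‖∫ x in s, g x ∂μ‖ₑ := by rw [hfg]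
    _ ≤ ∫⁻ x in s, ‖g x‖ₑ ∂μ := enorm_integral_le_lintegral_enorm _

def rightScattered (T : Set ℝ) : Set ℝ := {r | r ∈ T ∧ r < sigmaBar T r}

def gaps (T : Set ℝ) : Set ℝ := ⋃ r : rightScattered T, Ioc (r : ℝ) (sigmaBar T r)

section

variable {T : Set ℝ} {g g' : ℝ → ℝ}

-- Inserting `0` absorbs both the case `t = 0` and the junk value `sSup ∅ = 0` for `t < 0`.
lemma rhoBar_eq_sSup_insert (hTsub : T ⊆ Icc 0 1) (h0T : (0:ℝ) ∈ T) (t : ℝ) :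
    rhoBar T t = sSup (insert 0 {u | u ∈ T ∧ u < t}) := by
  rcases eq_empty_or_nonempty {u | u ∈ T ∧ u < t} with hS | ⟨u, hu⟩
  · simp [rhoBar, hS]
  · have ht : 0 < t := (hTsub hu.1).1.trans_lt hu.2
    rw [rhoBar, if_neg ht.ne',
      insert_eq_of_mem (show (0:ℝ) ∈ {u | u ∈ T ∧ u < t} from ⟨h0T, ht⟩)]

lemma bddAbove_insert_zero (hTsub : T ⊆ Icc 0 1) (t : ℝ) :
    BddAbove (insert 0 {u | u ∈ T ∧ u < t}) :=
  (show BddAbove {u | u ∈ T ∧ u < t} from ⟨1, fun _ hu => (hTsub hu.1).2⟩).insert 0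

lemma monotone_rhoBar (hTsub : T ⊆ Icc 0 1) (h0T : (0:ℝ) ∈ T) : Monotone (rhoBar T) := by
  intro a b hab
  rw [rhoBar_eq_sSup_insert hTsub h0T, rhoBar_eq_sSup_insert hTsub h0T]
  exact csSup_le_csSup (bddAbove_insert_zero hTsub b) (insert_nonempty _ _)
    (insert_subset_insert fun u hu => ⟨hu.1, hu.2.trans_le hab⟩)

lemma measurable_rhoBar (hTsub : T ⊆ Icc 0 1) (h0T : (0:ℝ) ∈ T) : Measurable (rhoBar T) :=
  (monotone_rhoBar hTsub h0T).measurable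

lemma rhoBar_mem (hT : IsClosed T) (hTsub : T ⊆ Icc 0 1) (h0T : (0:ℝ) ∈ T) (t : ℝ) :
    rhoBar T t ∈ T := by
  rw [rhoBar_eq_sSup_insert hTsub h0T]
  exact hT.closure_subset_iff.2 (insert_subset h0T fun u hu => hu.1)
    (csSup_mem_closure (insert_nonempty _ _) (bddAbove_insert_zero hTsub t))

lemma rhoBar_le_self (hTsub : T ⊆ Icc 0 1) (h0T : (0:ℝ) ∈ T) {t : ℝ} (ht : 0 ≤ t) :
    rhoBar T t ≤ t := by
  rw [rhoBar_eq_sSup_insert hTsub h0T]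
  exact csSup_le (insert_nonempty _ _) (forall_mem_insert.2 ⟨ht, fun u hu => hu.2.le⟩)

lemma le_rhoBar (hTsub : T ⊆ Icc 0 1) (h0T : (0:ℝ) ∈ T) {u t : ℝ} (hu : u ∈ T) (hut : u < t) :
    u ≤ rhoBar T t := by
  rw [rhoBar_eq_sSup_insert hTsub h0T]
  exact le_csSup (bddAbove_insert_zero hTsub t) (mem_insert_of_mem _ ⟨hu, hut⟩)

lemma sigmaBar_eq_sInf_insert (hTsub : T ⊆ Icc 0 1) (h1T : (1:ℝ) ∈ T) {t : ℝ} (ht : t ≤ 1) :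
    sigmaBar T t = sInf (insert 1 {u | u ∈ T ∧ t < u}) := by
  rcases ht.lt_or_eq with ht | rfl
  · rw [sigmaBar, if_neg ht.ne,
      insert_eq_of_mem (show (1:ℝ) ∈ {u | u ∈ T ∧ t < u} from ⟨h1T, ht⟩)]
  · have : {u | u ∈ T ∧ 1 < u} = ∅ :=
      eq_empty_of_forall_notMem fun u hu => hu.2.not_ge (hTsub hu.1).2
    simp [sigmaBar, this]

lemma bddBelow_insert_one (hTsub : T ⊆ Icc 0 1) (t : ℝ) :
    BddBelow (insert 1 {u | u ∈ T ∧ t < u}) :=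
  (show BddBelow {u | u ∈ T ∧ t < u} from ⟨0, fun _ hu => (hTsub hu.1).1⟩).insert 1

lemma sigmaBar_le_one (hTsub : T ⊆ Icc 0 1) (h1T : (1:ℝ) ∈ T) {t : ℝ} (ht : t ≤ 1) :
    sigmaBar T t ≤ 1 := by
  rw [sigmaBar_eq_sInf_insert hTsub h1T ht]
  exact csInf_le (bddBelow_insert_one hTsub t) (mem_insert _ _)

lemma sigmaBar_le (hTsub : T ⊆ Icc 0 1) (h1T : (1:ℝ) ∈ T) {u t : ℝ} (hu : u ∈ T) (htu : t < u) :
    sigmaBar T t ≤ u := by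
  rw [sigmaBar_eq_sInf_insert hTsub h1T (htu.le.trans (hTsub hu).2)]
  exact csInf_le (bddBelow_insert_one hTsub t) (mem_insert_of_mem _ ⟨hu, htu⟩)

lemma measurable_sigmaBar (hTsub : T ⊆ Icc 0 1) (h1T : (1:ℝ) ∈ T) :
    Measurable (sigmaBar T) := by
  have hmono : Monotone fun t => sInf (insert 1 {u | u ∈ T ∧ t < u}) := fun a b hab =>
    csInf_le_csInf (bddBelow_insert_one hTsub a) (insert_nonempty _ _)
      (insert_subset_insert fun u hu => ⟨hu.1, hab.trans_lt hu.2⟩)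
  -- beyond `1` the defining set is empty and `sInf ∅ = 0`
  have hσ : sigmaBar T = fun t => if t ≤ 1 then sInf (insert 1 {u | u ∈ T ∧ t < u}) else 0 := by
    funext t
    split_ifs with ht
    · exact sigmaBar_eq_sInf_insert hTsub h1T ht
    · have : {u | u ∈ T ∧ t < u} = ∅ :=
        eq_empty_of_forall_notMem fun u hu => ht (hu.2.le.trans (hTsub hu.1).2)
      rw [sigmaBar, if_neg (by rintro rfl; exact ht le_rfl), this, Real.sInf_empty]
  rw [hσ]
  exact Measurable.ite measurableSet_Iic hmono.measurable measurable_const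

lemma le_sigmaBar_rhoBar (hT : IsClosed T) (hTsub : T ⊆ Icc 0 1) (h0T : (0:ℝ) ∈ T)
    (h1T : (1:ℝ) ∈ T) {s : ℝ} (hs : s ≤ 1) : s ≤ sigmaBar T (rhoBar T s) := by
  rw [sigmaBar_eq_sInf_insert hTsub h1T (hTsub (rhoBar_mem hT hTsub h0T s)).2]
  refine le_csInf (insert_nonempty _ _) (forall_mem_insert.2 ⟨hs, fun u hu => ?_⟩)
  by_contra! hus
  exact hu.2.not_ge (le_rhoBar hTsub h0T hu.1 hus)

lemma rhoBar_eq_of_mem_Ioc (hTsub : T ⊆ Icc 0 1) (h0T : (0:ℝ) ∈ T) (h1T : (1:ℝ) ∈ T)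
    {r s : ℝ} (hr : r ∈ T) (hs : s ∈ Ioc r (sigmaBar T r)) : rhoBar T s = r := by
  refine le_antisymm ?_ (le_rhoBar hTsub h0T hr hs.1)
  rw [rhoBar_eq_sSup_insert hTsub h0T]
  refine csSup_le (insert_nonempty _ _) (forall_mem_insert.2 ⟨(hTsub hr).1, fun u hu => ?_⟩)
  by_contra! hru
  exact (hu.2.trans_le hs.2).not_ge (sigmaBar_le hTsub h1T hu.1 hru)

lemma Ioc_sigmaBar_subset_Icc (hTsub : T ⊆ Icc 0 1) (h1T : (1:ℝ) ∈ T) {r : ℝ} (hr : r ∈ T) :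
    Ioc r (sigmaBar T r) ⊆ Icc 0 1 :=
  Ioc_subset_Icc_self.trans
    (Icc_subset_Icc (hTsub hr).1 (sigmaBar_le_one hTsub h1T (hTsub hr).2))

lemma gaps_subset_Icc (hTsub : T ⊆ Icc 0 1) (h1T : (1:ℝ) ∈ T) : gaps T ⊆ Icc 0 1 :=
  iUnion_subset fun r => Ioc_sigmaBar_subset_Icc hTsub h1T r.2.1

lemma eq_of_mem_Ioc_sigmaBar (hTsub : T ⊆ Icc 0 1) (h0T : (0:ℝ) ∈ T) (h1T : (1:ℝ) ∈ T)
    {a b s : ℝ} (ha : a ∈ T) (hb : b ∈ T) (hsa : s ∈ Ioc a (sigmaBar T a))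
    (hsb : s ∈ Ioc b (sigmaBar T b)) : a = b :=
  (rhoBar_eq_of_mem_Ioc hTsub h0T h1T ha hsa).symm.trans
    (rhoBar_eq_of_mem_Ioc hTsub h0T h1T hb hsb)

lemma countable_rightScattered (hTsub : T ⊆ Icc 0 1) (h0T : (0:ℝ) ∈ T) (h1T : (1:ℝ) ∈ T) :
    (rightScattered T).Countable :=
  PairwiseDisjoint.countable_of_Ioo
    (fun _ ha _ hb hab => disjoint_left.2 fun _ hsa hsb =>
      hab (eq_of_mem_Ioc_sigmaBar hTsub h0T h1T ha.1 hb.1 (Ioo_subset_Ioc_self hsa)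
        (Ioo_subset_Ioc_self hsb)))
    fun _ hr => hr.2

lemma pairwise_disjoint_Ioc_sigmaBar (hTsub : T ⊆ Icc 0 1) (h0T : (0:ℝ) ∈ T) (h1T : (1:ℝ) ∈ T) :
    Pairwise (Function.onFun Disjoint fun r : rightScattered T => Ioc (r : ℝ) (sigmaBar T r)) :=
  fun a b hab => disjoint_left.2 fun _ hsa hsb =>
    hab (Subtype.ext (eq_of_mem_Ioc_sigmaBar hTsub h0T h1T a.2.1 b.2.1 hsa hsb))

lemma measurableSet_gaps (hTsub : T ⊆ Icc 0 1) (h0T : (0:ℝ) ∈ T) (h1T : (1:ℝ) ∈ T) :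
    MeasurableSet (gaps T) :=
  have := (countable_rightScattered hTsub h0T h1T).to_subtype
  MeasurableSet.iUnion fun _ => measurableSet_Ioc

lemma volume_restrict_Icc_eq (hTsub : T ⊆ Icc 0 1) (h0T : (0:ℝ) ∈ T) (h1T : (1:ℝ) ∈ T) :
    volume.restrict (Icc (0:ℝ) 1) = volume.restrict (Icc 0 1 \ gaps T) +
      Measure.sum fun r : rightScattered T => volume.restrict (Ioc (r : ℝ) (sigmaBar T r)) := by
  have := (countable_rightScattered hTsub h0T h1T).to_subtype
  rw [← Measure.restrict_iUnion (pairwise_disjoint_Ioc_sigmaBar hTsub h0T h1T)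
      fun _ => measurableSet_Ioc, ← gaps,
    ← Measure.restrict_union disjoint_sdiff_left (measurableSet_gaps hTsub h0T h1T),
    sdiff_union_of_subset (gaps_subset_Icc hTsub h1T)]

lemma rhoBar_eq_self_and_sigmaBar_eq_self (hT : IsClosed T) (hTsub : T ⊆ Icc 0 1)
    (h0T : (0:ℝ) ∈ T) (h1T : (1:ℝ) ∈ T) {s : ℝ} (hs : s ∈ Icc 0 1) (hsG : s ∉ gaps T)
    (hsR : s ∉ rightScattered T) : rhoBar T s = s ∧ sigmaBar T s = s := by
  have hσ := le_sigmaBar_rhoBar hT hTsub h0T h1T hs.2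
  have hρ : rhoBar T s = s := by
    refine (rhoBar_le_self hTsub h0T hs.1).eq_of_not_lt fun hlt => hsG ?_
    exact mem_iUnion.2 ⟨⟨rhoBar T s, rhoBar_mem hT hTsub h0T s, hlt.trans_le hσ⟩, hlt, hσ⟩
  rw [hρ] at hσ
  refine ⟨hρ, le_antisymm (not_lt.1 fun hlt => hsR ?_) hσ⟩
  exact ⟨hρ ▸ rhoBar_mem hT hTsub h0T s, hlt⟩

lemma measurable_htilde (hg : Measurable g) : Measurable (htilde g) := by
  have hH : htilde g = fun t =>
      ∫ x, {p : ℝ × ℝ | 0 ≤ p.2 ∧ p.2 < p.1}.indicator (g ∘ Prod.snd) (t, x) := by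
    funext t
    rw [htilde, ← integral_indicator measurableSet_Ico]
    rfl
  rw [hH]
  refine (StronglyMeasurable.integral_prod_right' ?_).measurable
  exact ((hg.comp measurable_snd).indicator
    ((measurableSet_le measurable_const measurable_snd).inter
      (measurableSet_lt measurable_snd measurable_fst))).stronglyMeasurable

lemma measurable_jDensity (hTsub : T ⊆ Icc 0 1) (h1T : (1:ℝ) ∈ T) (hg : Measurable g) :
    Measurable (jDensity T g) := by
  have hσ := measurable_sigmaBar hTsub h1T
  have hH := measurable_htilde hg
  exact Measurable.ite (measurableSet_eq_fun hσ measurable_id) hg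
    (((hH.comp hσ).sub hH).div (hσ.sub measurable_id))

lemma htilde_sub_htilde (hg : IntegrableOn g (Icc 0 1)) {a b : ℝ} (ha : 0 ≤ a) (hab : a ≤ b)
    (hb : b ≤ 1) : htilde g b - htilde g a = ∫ x in Ioc a b, g x := by
  have hgb : IntegrableOn g (Ico 0 b) :=
    hg.mono_set (Ico_subset_Icc_self.trans (Icc_subset_Icc_right hb))
  rw [htilde, htilde, ← Ico_union_Ico_eq_Ico ha hab,
    setIntegral_union Ico_disjoint_Ico_same measurableSet_Ico
      (hgb.mono_set (Ico_subset_Ico_right hab)) (hgb.mono_set (Ico_subset_Ico_left ha)),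
    add_sub_cancel_left, setIntegral_congr_set Ico_ae_eq_Ioc]

lemma htilde_congr_ae (hgg' : g =ᵐ[volume.restrict (Icc 0 1)] g') {t : ℝ} (ht : t ≤ 1) :
    htilde g t = htilde g' t :=
  integral_congr_ae (ae_restrict_of_ae_restrict_of_subset
    (Ico_subset_Icc_self.trans (Icc_subset_Icc_right ht)) hgg')

lemma jDensity_rhoBar_of_mem_Ioc (hTsub : T ⊆ Icc 0 1) (h0T : (0:ℝ) ∈ T) (h1T : (1:ℝ) ∈ T)
    (hg : IntegrableOn g (Icc 0 1)) {r s : ℝ} (hr : r ∈ rightScattered T)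
    (hs : s ∈ Ioc r (sigmaBar T r)) :
    jDensity T g (rhoBar T s) = (∫ x in Ioc r (sigmaBar T r), g x) / (sigmaBar T r - r) := by
  rw [rhoBar_eq_of_mem_Ioc hTsub h0T h1T hr.1 hs, jDensity, if_neg hr.2.ne',
    htilde_sub_htilde hg (hTsub hr.1).1 hr.2.le (sigmaBar_le_one hTsub h1T (hTsub hr.1).2)]

lemma setIntegral_Ioc_jDensity_rhoBar (hTsub : T ⊆ Icc 0 1) (h0T : (0:ℝ) ∈ T)
    (h1T : (1:ℝ) ∈ T) (hg : IntegrableOn g (Icc 0 1)) {r : ℝ} (hr : r ∈ rightScattered T) :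
    ∫ s in Ioc r (sigmaBar T r), jDensity T g (rhoBar T s) =
      ∫ s in Ioc r (sigmaBar T r), g s := by
  rw [setIntegral_congr_fun measurableSet_Ioc fun s hs =>
      jDensity_rhoBar_of_mem_Ioc hTsub h0T h1T hg hr hs,
    setIntegral_const, Real.volume_real_Ioc_of_le hr.2.le, smul_eq_mul,
    mul_div_cancel₀ _ (sub_pos.2 hr.2).ne']

lemma jDensity_rhoBar_ae_eq (hT : IsClosed T) (hTsub : T ⊆ Icc 0 1) (h0T : (0:ℝ) ∈ T)
    (h1T : (1:ℝ) ∈ T) :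
    (fun s => jDensity T g (rhoBar T s)) =ᵐ[volume.restrict (Icc 0 1 \ gaps T)] g := by
  filter_upwards [ae_restrict_mem (measurableSet_Icc.diff (measurableSet_gaps hTsub h0T h1T)),
    ae_restrict_of_ae ((countable_rightScattered hTsub h0T h1T).ae_notMem volume)]
    with s hs hsR
  obtain ⟨hρ, hσ⟩ := rhoBar_eq_self_and_sigmaBar_eq_self hT hTsub h0T h1T hs.1 hs.2 hsR
  rw [hρ, jDensity, if_pos hσ]

lemma lintegral_enorm_jDensity_rhoBar_le (hT : IsClosed T) (hTsub : T ⊆ Icc 0 1)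
    (h0T : (0:ℝ) ∈ T) (h1T : (1:ℝ) ∈ T) (hg : IntegrableOn g (Icc 0 1)) :
    ∫⁻ s in Icc 0 1, ‖jDensity T g (rhoBar T s)‖ₑ ≤ ∫⁻ s in Icc 0 1, ‖g s‖ₑ := by
  rw [volume_restrict_Icc_eq hTsub h0T h1T, lintegral_add_measure, lintegral_add_measure,
    lintegral_sum_measure, lintegral_sum_measure]
  refine add_le_add (lintegral_congr_ae ?_).le (ENNReal.tsum_le_tsum fun r => ?_)
  · filter_upwards [jDensity_rhoBar_ae_eq hT hTsub h0T h1T] with s hs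
    rw [hs]
  · exact setLIntegral_enorm_le_of_eqOn_const measurableSet_Ioc measure_Ioc_lt_top.ne
      (fun s hs => jDensity_rhoBar_of_mem_Ioc hTsub h0T h1T hg r.2 hs)
      (setIntegral_Ioc_jDensity_rhoBar hTsub h0T h1T hg r.2)

lemma integrable_jDensity_rhoBar (hT : IsClosed T) (hTsub : T ⊆ Icc 0 1)
    (h0T : (0:ℝ) ∈ T) (h1T : (1:ℝ) ∈ T) (hgm : Measurable g) (hg : IntegrableOn g (Icc 0 1)) :
    IntegrableOn (fun s => jDensity T g (rhoBar T s)) (Icc 0 1) :=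
  ⟨((measurable_jDensity hTsub h1T hgm).comp (measurable_rhoBar hTsub h0T)).aestronglyMeasurable,
    (lintegral_enorm_jDensity_rhoBar_le hT hTsub h0T h1T hg).trans_lt hg.2⟩

lemma integral_restrict_Icc_eq (hTsub : T ⊆ Icc 0 1) (h0T : (0:ℝ) ∈ T) (h1T : (1:ℝ) ∈ T)
    {f : ℝ → ℝ} {B : Set ℝ} (hB : MeasurableSet B)
    (hf : IntegrableOn f B (volume.restrict (Icc 0 1))) :
    ∫ s in B, f s ∂(volume.restrict (Icc 0 1)) =
      ∫ s in B, f s ∂(volume.restrict (Icc 0 1 \ gaps T)) +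
        ∑' r : rightScattered T, ∫ s in B, f s ∂(volume.restrict (Ioc (r : ℝ) (sigmaBar T r))) := by
  rw [IntegrableOn, volume_restrict_Icc_eq hTsub h0T h1T, Measure.restrict_add,
    Measure.restrict_sum _ hB, integrable_add_measure] at hf
  rw [volume_restrict_Icc_eq hTsub h0T h1T, Measure.restrict_add, Measure.restrict_sum _ hB,
    integral_add_measure hf.1 hf.2, integral_sum_measure hf.2]

lemma setIntegral_preimage_rhoBar_jDensity (hT : IsClosed T) (hTsub : T ⊆ Icc 0 1)
    (h0T : (0:ℝ) ∈ T) (h1T : (1:ℝ) ∈ T) (hgm : Measurable g) (hg : IntegrableOn g (Icc 0 1))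
    {A : Set ℝ} (hA : MeasurableSet A) :
    ∫ s in rhoBar T ⁻¹' A, jDensity T g (rhoBar T s) ∂(volume.restrict (Icc 0 1)) =
      ∫ s in rhoBar T ⁻¹' A, g s ∂(volume.restrict (Icc 0 1)) := by
  have hB := measurable_rhoBar hTsub h0T hA
  rw [integral_restrict_Icc_eq hTsub h0T h1T hB
      (Integrable.integrableOn (integrable_jDensity_rhoBar hT hTsub h0T h1T hgm hg)),
    integral_restrict_Icc_eq hTsub h0T h1T hB (Integrable.integrableOn hg)]
  congr 1
  · exact integral_congr_ae (ae_restrict_of_ae (jDensity_rhoBar_ae_eq hT hTsub h0T h1T))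
  · refine tsum_congr fun r => ?_
    rw [Measure.restrict_restrict hB]
    by_cases hrA : (r : ℝ) ∈ A
    · have hsub : Ioc (r : ℝ) (sigmaBar T r) ⊆ rhoBar T ⁻¹' A := fun s hs => by
        rwa [mem_preimage, rhoBar_eq_of_mem_Ioc hTsub h0T h1T r.2.1 hs]
      rw [inter_eq_right.2 hsub]
      exact setIntegral_Ioc_jDensity_rhoBar hTsub h0T h1T hg r.2
    · have hdisj : rhoBar T ⁻¹' A ∩ Ioc (r : ℝ) (sigmaBar T r) = ∅ :=
        eq_empty_of_forall_notMem fun s hs =>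
          hrA (rhoBar_eq_of_mem_Ioc hTsub h0T h1T r.2.1 hs.2 ▸ hs.1)
      simp [hdisj]

lemma jDensity_rhoBar_ae_eq_condExp (hT : IsClosed T) (hTsub : T ⊆ Icc 0 1)
    (h0T : (0:ℝ) ∈ T) (h1T : (1:ℝ) ∈ T) (hgm : Measurable g) (hg : IntegrableOn g (Icc 0 1)) :
    (fun s => jDensity T g (rhoBar T s)) =ᵐ[volume.restrict (Icc 0 1)]
      (volume.restrict (Icc 0 1))[g | MeasurableSpace.comap (rhoBar T) inferInstance] :=
  ae_eq_condExp_of_forall_setIntegral_eq (measurable_rhoBar hTsub h0T).comap_le hg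
    (fun _ _ _ => Integrable.integrableOn (integrable_jDensity_rhoBar hT hTsub h0T h1T hgm hg))
    (fun _ ⟨_, hA, hB⟩ _ => hB ▸ setIntegral_preimage_rhoBar_jDensity hT hTsub h0T h1T hgm hg hA)
    ((measurable_jDensity hTsub h1T hgm).comp (comap_measurable _)).aestronglyMeasurable

lemma htilde_eq_setIntegral_jDensity (hT : IsClosed T) (hTsub : T ⊆ Icc 0 1)
    (h0T : (0:ℝ) ∈ T) (h1T : (1:ℝ) ∈ T) (hgm : Measurable g) (hg : IntegrableOn g (Icc 0 1))
    {t : ℝ} (ht : t ∈ T) :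
    htilde g t = ∫ s in Ico (0:ℝ) t ∩ T, jDensity T g s ∂(lamDelta T) := by
  have hρ := measurable_rhoBar hTsub h0T
  have hE : MeasurableSet (Ico (0:ℝ) t ∩ T) := measurableSet_Ico.inter hT.measurableSet
  have hlow : Ico 0 t ⊆ rhoBar T ⁻¹' (Ico 0 t ∩ T) ∩ Icc 0 1 := fun s hs =>
    ⟨⟨⟨(hTsub (rhoBar_mem hT hTsub h0T s)).1, (rhoBar_le_self hTsub h0T hs.1).trans_lt hs.2⟩,
      rhoBar_mem hT hTsub h0T s⟩, hs.1, hs.2.le.trans (hTsub ht).2⟩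
  have hup : rhoBar T ⁻¹' (Ico 0 t ∩ T) ∩ Icc 0 1 ⊆ Icc 0 t := fun s hs =>
    ⟨hs.2.1, not_lt.1 fun hts => (le_rhoBar hTsub h0T ht hts).not_gt hs.1.1.2⟩
  rw [lamDelta, setIntegral_map hE (measurable_jDensity hTsub h1T hgm).aestronglyMeasurable
      hρ.aemeasurable, setIntegral_preimage_rhoBar_jDensity hT hTsub h0T h1T hgm hg hE,
    Measure.restrict_restrict (hρ hE), htilde]
  exact setIntegral_congr_set
    (hlow.eventuallyLE.antisymm (hup.eventuallyLE.trans Ico_ae_eq_Icc.symm.le))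

lemma abs_integral_mul_jDensity_le (hT : IsClosed T) (hTsub : T ⊆ Icc 0 1)
    (h0T : (0:ℝ) ∈ T) (h1T : (1:ℝ) ∈ T) {hΔ : ℝ → ℝ} (hh : MemLp hΔ 2 (lamDelta T))
    (hgm : Measurable g) (hg : MemLp g 2 (volume.restrict (Icc 0 1))) :
    |∫ s, hΔ s * jDensity T g s ∂(lamDelta T)| ≤
      √(∫ s, hΔ s ^ 2 ∂(lamDelta T)) * √(∫ s in Icc 0 1, g s ^ 2) := by
  set μ := volume.restrict (Icc (0:ℝ) 1)
  have hρ := measurable_rhoBar hTsub h0T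
  set v := fun s => hΔ (rhoBar T s)
  have hv : MemLp v 2 μ := (memLp_map_measure_iff hh.1 hρ.aemeasurable).1 hh
  have hvm : AEStronglyMeasurable[MeasurableSpace.comap (rhoBar T) inferInstance] v μ :=
    ⟨hh.1.mk hΔ ∘ rhoBar T, hh.1.stronglyMeasurable_mk.comp_measurable (comap_measurable _),
      ae_of_ae_map hρ.aemeasurable hh.1.ae_eq_mk⟩
  have hgi : Integrable g μ := hg.integrable one_le_two
  have hw := jDensity_rhoBar_ae_eq_condExp hT hTsub h0T h1T hgm hgi
  have hpull : ∫ s, hΔ s * jDensity T g s ∂(lamDelta T) = ∫ s, v s * g s ∂μ :=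
    calc ∫ s, hΔ s * jDensity T g s ∂(lamDelta T)
        = ∫ s, v s * jDensity T g (rhoBar T s) ∂μ := integral_map hρ.aemeasurable
          (hh.1.mul (measurable_jDensity hTsub h1T hgm).aestronglyMeasurable)
      _ = ∫ s, (v * μ[g | MeasurableSpace.comap (rhoBar T) inferInstance]) s ∂μ :=
          integral_congr_ae ((Filter.EventuallyEq.refl _ v).mul hw)
      _ = ∫ s, μ[v * g | MeasurableSpace.comap (rhoBar T) inferInstance] s ∂μ :=
          integral_congr_ae
            (condExp_mul_of_aestronglyMeasurable_left hvm (hv.integrable_mul hg) hgi).symm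
      _ = ∫ s, v s * g s ∂μ := integral_condExp hρ.comap_le
  rw [hpull, lamDelta, integral_map (f := fun s => hΔ s ^ 2) hρ.aemeasurable (hh.1.pow 2)]
  exact abs_integral_mul_le_sqrt_mul_sqrt hv hg

lemma lamDelta_restrict_absolutelyContinuous (hT : IsClosed T) (hTsub : T ⊆ Icc 0 1)
    (h0T : (0:ℝ) ∈ T) (h1T : (1:ℝ) ∈ T) :
    (lamDelta T).restrict {t | sigmaBar T t = t} ≪ volume.restrict (Icc 0 1) := by
  have hρ := measurable_rhoBar hTsub h0T
  have hfix : MeasurableSet {t | sigmaBar T t = t} :=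
    measurableSet_eq_fun (measurable_sigmaBar hTsub h1T) measurable_id
  refine Measure.AbsolutelyContinuous.mk fun E hE hE0 => ?_
  rw [Measure.restrict_apply hE] at hE0
  rw [Measure.restrict_apply hE, lamDelta, Measure.map_apply hρ (hE.inter hfix),
    Measure.restrict_apply (hρ (hE.inter hfix))]
  refine measure_mono_null (fun s hs => ?_) hE0
  have hρs : rhoBar T s = s := le_antisymm (rhoBar_le_self hTsub h0T hs.2.1)
    ((le_sigmaBar_rhoBar hT hTsub h0T h1T hs.2.2).trans_eq hs.1.2)
  exact ⟨hρs ▸ hs.1.1, hs.2⟩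

lemma jDensity_ae_eq_of_ae_eq (hT : IsClosed T) (hTsub : T ⊆ Icc 0 1) (h0T : (0:ℝ) ∈ T)
    (h1T : (1:ℝ) ∈ T) (hgg' : g =ᵐ[volume.restrict (Icc 0 1)] g') :
    jDensity T g =ᵐ[lamDelta T] jDensity T g' := by
  have hmemT : ∀ᵐ t ∂(lamDelta T), t ∈ T :=
    (ae_map_iff (measurable_rhoBar hTsub h0T).aemeasurable hT.measurableSet).2
      (Filter.Eventually.of_forall (rhoBar_mem hT hTsub h0T))
  have hfix := (ae_restrict_iff' (measurableSet_eq_fun (measurable_sigmaBar hTsub h1T)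
    measurable_id)).1 ((lamDelta_restrict_absolutelyContinuous hT hTsub h0T h1T).ae_le hgg')
  filter_upwards [hmemT, hfix] with t htT hgt
  rw [jDensity, jDensity]
  split_ifs with hσ
  · exact hgt hσ
  · rw [htilde_congr_ae hgg' (sigmaBar_le_one hTsub h1T (hTsub htT).2),
      htilde_congr_ae hgg' (hTsub htT).2]

end

theorem stmt_12 (T : Set ℝ) (hT : IsClosed T) (hTsub : T ⊆ Icc 0 1)
    (h0T : (0:ℝ) ∈ T) (h1T : (1:ℝ) ∈ T)
    (hΔ g : ℝ → ℝ) (hh : MemLp hΔ 2 (lamDelta T))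
    (hg : MemLp g 2 (volume.restrict (Icc 0 1))) :
    (∀ t ∈ T, htilde g t = ∫ s in Ico (0:ℝ) t ∩ T, jDensity T g s ∂(lamDelta T)) ∧
    |∫ s, hΔ s * jDensity T g s ∂(lamDelta T)| ≤
      2 * Real.sqrt (∫ s, (hΔ s)^2 ∂(lamDelta T)) * Real.sqrt (∫ s in Icc (0:ℝ) 1, (g s)^2) := by
  obtain ⟨g', hg'm, hgg'⟩ := hg.1.aemeasurable
  have hg' : MemLp g' 2 (volume.restrict (Icc 0 1)) := hg.ae_eq hgg'
  have hJ := jDensity_ae_eq_of_ae_eq hT hTsub h0T h1T hgg'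
  refine ⟨fun t ht => ?_, ?_⟩
  · rw [htilde_congr_ae hgg' (hTsub ht).2, integral_congr_ae (ae_restrict_of_ae hJ)]
    exact htilde_eq_setIntegral_jDensity hT hTsub h0T h1T hg'm (hg'.integrable one_le_two) ht
  · have hprod : ∫ s, hΔ s * jDensity T g s ∂(lamDelta T) =
        ∫ s, hΔ s * jDensity T g' s ∂(lamDelta T) :=
      integral_congr_ae (by filter_upwards [hJ] with s hs; rw [hs])
    have hsq : ∫ s in Icc 0 1, g s ^ 2 = ∫ s in Icc 0 1, g' s ^ 2 :=
      integral_congr_ae (by filter_upwards [hgg'] with s hs; rw [hs])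
    have hbound := abs_integral_mul_jDensity_le hT hTsub h0T h1T hh hg'm hg'
    have hnonneg := mul_nonneg (Real.sqrt_nonneg (∫ s, hΔ s ^ 2 ∂(lamDelta T)))
      (Real.sqrt_nonneg (∫ s in Icc 0 1, g' s ^ 2))
    rw [hprod, hsq]
    linarith
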